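/- arXiv:2603.25400 — 2 statements merged into one kernel-verified Lean document; each statement's English description precedes it below -/
import Mathlib

section
/- Define ψ(m,b,T) := Φ̄(m√T − b/√T) − e^{2bm} Φ̄(m√T + b/√T), where Φ̄ is the standard Gaussian tail function. There exist universal constants C, c' > 0 such that for all m > 0 and all 0 < b ≤ √T, ψ(m,b,T) ≤ C · (b/√T) · e^{−c' m² T}. -/
open MeasureTheory ProbabilityTheory Real Set

/-- The standard Gaussian tail function `Φ̄(s) = ∫_s^∞ (2π)^{-1/2} e^{-u²/2} du`. -/
noncomputable def gaussTail (s : ℝ) : ℝ :=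
  ∫ u in Set.Ioi s, (Real.sqrt (2 * Real.pi))⁻¹ * Real.exp (-u ^ 2 / 2)

/-- `ψ(m,b,T) = Φ̄(m√T − b/√T) − e^{2bm} Φ̄(m√T + b/√T)`. -/
noncomputable def psi (m b T : ℝ) : ℝ :=
  gaussTail (m * Real.sqrt T - b / Real.sqrt T)
    - Real.exp (2 * b * m) * gaussTail (m * Real.sqrt T + b / Real.sqrt T)

/-!
Since `e^{2bm} ≥ 1`, `ψ(m,b,T) ≤ Φ̄(a - β) - Φ̄(a + β)` with `a = m√T` and `β = b/√T ≤ 1`.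
This is the Gaussian mass of an interval of length `2β` around `a`, and on that interval
`e^{-u²/2} ≤ e^{1/2} e^{-a²/4}` because `a² ≤ (|u| + 1)² ≤ 2u² + 2`; finally `e^{1/2} ≤ √(2π)`.
-/

lemma integrable_gaussDensity :
    Integrable (fun u : ℝ => (√(2 * π))⁻¹ * rexp (-u ^ 2 / 2)) := by
  have h : ∀ u : ℝ, -u ^ 2 / 2 = -(1 / 2 : ℝ) * u ^ 2 := fun u => by ring
  simp_rw [h]
  exact (integrable_exp_neg_mul_sq (by norm_num)).const_mul _

lemma gaussTail_nonneg (s : ℝ) : 0 ≤ gaussTail s :=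
  setIntegral_nonneg measurableSet_Ioi fun _ _ => by positivity

lemma gaussTail_sub_gaussTail {s t : ℝ} (h : s ≤ t) :
    gaussTail s - gaussTail t = ∫ u in Ioc s t, (√(2 * π))⁻¹ * rexp (-u ^ 2 / 2) := by
  have hsplit := setIntegral_union (Ioc_disjoint_Ioi (le_refl t) (a := s)) measurableSet_Ioi
    integrable_gaussDensity.integrableOn integrable_gaussDensity.integrableOn
  rw [Ioc_union_Ioi_eq_Ioi h] at hsplit
  rw [gaussTail, gaussTail, hsplit, add_sub_cancel_right]

lemma exp_half_le_sqrt_two_mul_pi : rexp (1 / 2) ≤ √(2 * π) := by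
  rw [Real.le_sqrt (by positivity) (by positivity), ← Real.exp_nat_mul,
    show ((2 : ℕ) : ℝ) * (1 / 2) = 1 by norm_num]
  linarith [Real.exp_one_lt_d9, Real.pi_gt_three]

lemma gaussDensity_le_of_abs_sub_le_one {u a : ℝ} (h : |u - a| ≤ 1) :
    (√(2 * π))⁻¹ * rexp (-u ^ 2 / 2) ≤ rexp (-a ^ 2 / 4) := by
  have hsq : a ^ 2 ≤ 2 * u ^ 2 + 2 := by
    have : |a| ≤ |u| + 1 := by
      calc |a| = |u - (u - a)| := by ring_nf
        _ ≤ |u| + |u - a| := abs_sub _ _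
        _ ≤ |u| + 1 := by linarith
    nlinarith [sq_abs a, sq_abs u, abs_nonneg a, sq_nonneg (|u| - 1)]
  have hexp : rexp (-u ^ 2 / 2) ≤ rexp (1 / 2) * rexp (-a ^ 2 / 4) := by
    rw [← Real.exp_add]
    exact Real.exp_le_exp.mpr (by linarith)
  rw [inv_mul_le_iff₀ (by positivity)]
  exact hexp.trans (mul_le_mul_of_nonneg_right exp_half_le_sqrt_two_mul_pi (by positivity))

lemma gaussTail_sub_le {a β : ℝ} (hβ0 : 0 ≤ β) (hβ1 : β ≤ 1) :
    gaussTail (a - β) - gaussTail (a + β) ≤ 2 * β * rexp (-a ^ 2 / 4) := by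
  rw [gaussTail_sub_gaussTail (by linarith)]
  calc ∫ u in Ioc (a - β) (a + β), (√(2 * π))⁻¹ * rexp (-u ^ 2 / 2)
      ≤ ∫ _ in Ioc (a - β) (a + β), rexp (-a ^ 2 / 4) := by
        refine setIntegral_mono_on integrable_gaussDensity.integrableOn
          (integrableOn_const measure_Ioc_lt_top.ne) measurableSet_Ioc fun u hu => ?_
        exact gaussDensity_le_of_abs_sub_le_one
          (abs_le.mpr ⟨by linarith [hu.1], by linarith [hu.2]⟩)
    _ = 2 * β * rexp (-a ^ 2 / 4) := by
        rw [setIntegral_const, measureReal_def, Real.volume_Ioc,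
          ENNReal.toReal_ofReal (by linarith), smul_eq_mul]
        ring

lemma psi_le_gaussTail_sub {m b : ℝ} (hm : 0 ≤ m) (hb : 0 ≤ b) (T : ℝ) :
    psi m b T ≤ gaussTail (m * √T - b / √T) - gaussTail (m * √T + b / √T) := by
  have hexp : 1 ≤ rexp (2 * b * m) := Real.one_le_exp (by positivity)
  have htail := gaussTail_nonneg (m * √T + b / √T)
  rw [psi]
  nlinarith

/-- There are universal constants `C, c' > 0` such that for all `m > 0`
and `0 < b ≤ √T`, `ψ(m,b,T) ≤ C (b/√T) e^{−c' m² T}`. -/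
theorem psi_upper_bound :
    ∃ C c' : ℝ, 0 < C ∧ 0 < c' ∧
      ∀ m b T : ℝ, 0 < m → 0 < b → b ≤ Real.sqrt T →
        psi m b T ≤ C * (b / Real.sqrt T) * Real.exp (-c' * m ^ 2 * T) := by
  refine ⟨2, 1 / 4, by norm_num, by norm_num, fun m b T hm hb hbT => ?_⟩
  have hsT : 0 < √T := hb.trans_le hbT
  have hβ1 : b / √T ≤ 1 := (div_le_one hsT).mpr hbT
  have hexponent : -(m * √T) ^ 2 / 4 = -(1 / 4) * m ^ 2 * T := by
    rw [mul_pow, Real.sq_sqrt (Real.sqrt_pos.mp hsT).le]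
    ring
  calc psi m b T ≤ gaussTail (m * √T - b / √T) - gaussTail (m * √T + b / √T) :=
        psi_le_gaussTail_sub hm.le hb.le T
    _ ≤ 2 * (b / √T) * rexp (-(m * √T) ^ 2 / 4) :=
        gaussTail_sub_le (div_pos hb hsT).le hβ1
    _ = 2 * (b / √T) * rexp (-(1 / 4) * m ^ 2 * T) := by rw [hexponent]
end

section
/- Define ψ(m,b,T) := Φ̄(m√T − b/√T) − e^{2bm} Φ̄(m√T + b/√T), where Φ̄ is the standard Gaussian tail function. There exist universal constants C, c > 0 such that for all m > 0 and all 0 < b ≤ √T, ψ(m,b,T) ≥ C⁻¹ · (b/√T) · e^{−c m² T}. -/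
open MeasureTheory ProbabilityTheory Real Set

/-! With `a = m√T` and `β = b/√T`, the Cameron–Martin identity
`e^{2aβ} φ(u + 2β) = e^{-2β(u - (a - β))} φ(u)` turns `ψ` into the integral of the nonnegative
function `(1 - e^{-2β(u - (a - β))}) φ(u)` over `u > a - β`. On the window
`a - β + 1/2 < u ≤ a - β + 1` the first factor is at least `1 - e^{-β} ≥ (1 - e⁻¹) β` because
`β ≤ 1`, and `φ(u) ≥ (2π)^{-1/2} e^{-a² - 1}` because `|u - a| ≤ 1`; since `a² = m²T` this gives the
bound with `c = 1`. -/

lemma gaussTail_eq_setIntegral_gaussianPDFReal (s : ℝ) :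
    gaussTail s = ∫ u in Ioi s, gaussianPDFReal 0 1 u := by
  simp [gaussTail, gaussianPDFReal]

lemma setIntegral_Ioi_comp_add_right {E : Type*} [NormedAddCommGroup E] [NormedSpace ℝ E]
    (f : ℝ → E) (s c : ℝ) : ∫ u in Ioi (s - c), f (u + c) = ∫ u in Ioi s, f u := by
  rw [← preimage_add_const_Ioi]
  exact (measurePreserving_add_right volume c).setIntegral_preimage_emb
    (measurableEmbedding_addRight c) f (Ioi s)

lemma gaussianPDFReal_zero_one_add (u c : ℝ) :
    gaussianPDFReal 0 1 (u + c) = exp (-(c * u) - c ^ 2 / 2) * gaussianPDFReal 0 1 u := by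
  simp only [gaussianPDFReal, sub_zero, NNReal.coe_one, mul_one]
  rw [mul_left_comm, ← exp_add]
  ring_nf

lemma one_sub_exp_mul_gaussianPDFReal (a β u : ℝ) :
    (1 - exp (-(2 * β) * (u - (a - β)))) * gaussianPDFReal 0 1 u =
      gaussianPDFReal 0 1 u - exp (2 * a * β) * gaussianPDFReal 0 1 (u + 2 * β) := by
  rw [gaussianPDFReal_zero_one_add, ← mul_assoc, ← exp_add]
  ring_nf

lemma gaussTail_sub_exp_mul_gaussTail (a β : ℝ) :
    gaussTail (a - β) - exp (2 * a * β) * gaussTail (a + β) =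
      ∫ u in Ioi (a - β), (1 - exp (-(2 * β) * (u - (a - β)))) * gaussianPDFReal 0 1 u := by
  have hφ : Integrable (gaussianPDFReal 0 1) := integrable_gaussianPDFReal 0 1
  have hshift : exp (2 * a * β) * gaussTail (a + β) =
      ∫ u in Ioi (a - β), exp (2 * a * β) * gaussianPDFReal 0 1 (u + 2 * β) := by
    rw [gaussTail_eq_setIntegral_gaussianPDFReal, ← setIntegral_Ioi_comp_add_right _ _ (2 * β),
      integral_const_mul]
    ring_nf
  simp_rw [hshift, gaussTail_eq_setIntegral_gaussianPDFReal, one_sub_exp_mul_gaussianPDFReal]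
  exact (integral_sub hφ.integrableOn ((hφ.comp_add_right _).const_mul _).integrableOn).symm

lemma one_sub_exp_neg_one_mul_le {x : ℝ} (h0 : 0 ≤ x) (h1 : x ≤ 1) :
    (1 - exp (-1)) * x ≤ 1 - exp (-x) := by
  have h := convexOn_exp.2 (mem_univ 0) (mem_univ (-1)) (sub_nonneg.2 h1) h0 (by ring)
  simp only [smul_eq_mul, mul_zero, mul_neg, mul_one, zero_add, exp_zero] at h
  linarith

lemma exp_neg_sq_sub_one_le_gaussianPDFReal {a u : ℝ} (h : |u - a| ≤ 1) :
    (√(2 * π))⁻¹ * exp (-a ^ 2 - 1) ≤ gaussianPDFReal 0 1 u := by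
  have hsq : u ^ 2 ≤ 2 * a ^ 2 + 2 := by
    nlinarith [abs_le.1 h, sq_nonneg (u - 2 * a)]
  simp only [gaussianPDFReal, sub_zero, NNReal.coe_one, mul_one]
  gcongr
  linarith

lemma le_one_sub_exp_mul_gaussianPDFReal {a β u : ℝ} (hβ0 : 0 ≤ β) (hβ1 : β ≤ 1)
    (hu : u ∈ Ioc (a - β + 1 / 2) (a - β + 1)) :
    (1 - exp (-1)) * β * ((√(2 * π))⁻¹ * exp (-a ^ 2 - 1)) ≤
      (1 - exp (-(2 * β) * (u - (a - β)))) * gaussianPDFReal 0 1 u := by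
  obtain ⟨hu1, hu2⟩ := hu
  have hexp : (1 - exp (-1)) * β ≤ 1 - exp (-(2 * β) * (u - (a - β))) := by
    have : exp (-(2 * β) * (u - (a - β))) ≤ exp (-β) := exp_le_exp.2 (by nlinarith)
    linarith [one_sub_exp_neg_one_mul_le hβ0 hβ1]
  have hφ := exp_neg_sq_sub_one_le_gaussianPDFReal (a := a) (u := u)
    (abs_le.2 ⟨by linarith, by linarith⟩)
  have hcoef : 0 ≤ (1 - exp (-1)) * β := mul_nonneg (by simp [exp_le_one_iff]) hβ0
  exact mul_le_mul hexp hφ (by positivity) (hcoef.trans hexp)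

lemma gaussTail_sub_exp_mul_gaussTail_ge {a β : ℝ} (hβ0 : 0 ≤ β) (hβ1 : β ≤ 1) :
    (1 - exp (-1)) / (2 * √(2 * π) * exp 1) * β * exp (-a ^ 2) ≤
      gaussTail (a - β) - exp (2 * a * β) * gaussTail (a + β) := by
  set g := fun u ↦ (1 - exp (-(2 * β) * (u - (a - β)))) * gaussianPDFReal 0 1 u
  have hg : Integrable g := by
    simp_rw [g, one_sub_exp_mul_gaussianPDFReal]
    have hφ : Integrable (gaussianPDFReal 0 1) := integrable_gaussianPDFReal 0 1
    exact hφ.sub ((hφ.comp_add_right _).const_mul _)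
  have hg_nonneg : ∀ u ∈ Ioi (a - β), 0 ≤ g u := fun u hu ↦
    mul_nonneg (sub_nonneg.2 (exp_le_one_iff.2 (by nlinarith [mem_Ioi.1 hu])))
      (gaussianPDFReal_nonneg 0 1 u)
  rw [gaussTail_sub_exp_mul_gaussTail]
  calc (1 - exp (-1)) / (2 * √(2 * π) * exp 1) * β * exp (-a ^ 2)
      = (1 - exp (-1)) * β * ((√(2 * π))⁻¹ * exp (-a ^ 2 - 1)) *
          volume.real (Ioc (a - β + 1 / 2) (a - β + 1)) := by
        rw [Real.volume_real_Ioc_of_le (by linarith), sub_eq_add_neg _ (1 : ℝ), exp_add, exp_neg 1]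
        field_simp
        ring
    _ ≤ ∫ u in Ioc (a - β + 1 / 2) (a - β + 1), g u :=
        setIntegral_ge_of_const_le_real measurableSet_Ioc (by simp)
          (fun u hu ↦ le_one_sub_exp_mul_gaussianPDFReal hβ0 hβ1 hu) hg.integrableOn
    _ ≤ ∫ u in Ioi (a - β), g u :=
        setIntegral_mono_set hg.integrableOn
          (ae_restrict_of_forall_mem measurableSet_Ioi hg_nonneg)
          (Ioc_subset_Ioi_self.trans (Ioi_subset_Ioi (by linarith))).eventuallyLE

/-- There are universal constants `C, c > 0` such that for all `m > 0`
and `0 < b ≤ √T`, `ψ(m,b,T) ≥ C⁻¹ (b/√T) e^{−c m² T}`. -/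
theorem psi_lower_bound :
    ∃ C c : ℝ, 0 < C ∧ 0 < c ∧
      ∀ m b T : ℝ, 0 < m → 0 < b → b ≤ Real.sqrt T →
        C⁻¹ * (b / Real.sqrt T) * Real.exp (-c * m ^ 2 * T) ≤ psi m b T := by
  refine ⟨2 * √(2 * π) * exp 1 / (1 - exp (-1)), 1,
    div_pos (by positivity) (by simp [exp_lt_one_iff]), one_pos, ?_⟩
  intro m b T _ hb hbT
  have hsT : 0 < √T := hb.trans_le hbT
  have key := gaussTail_sub_exp_mul_gaussTail_ge (a := m * √T) (div_pos hb hsT).le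
    ((div_le_one hsT).2 hbT)
  have hexp : 2 * (m * √T) * (b / √T) = 2 * b * m := by field_simp
  have hsq : (m * √T) ^ 2 = m ^ 2 * T := by rw [mul_pow, sq_sqrt (sqrt_pos.1 hsT).le]
  rw [hexp, hsq] at key
  rwa [psi, inv_div, neg_one_mul, neg_mul]
end
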